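/- Let Λ be the rank-2 lattice with Gram matrix [[2a, 2m],[2m, 2b]] where a ≥ 0, m ≥ 0, b < 0 are integers with m^2 > ab and 2 ∣ a. Let Σ_6 be the rank-7 lattice with Gram matrix diag(2, -2, -2, -2, -2, -2, -2) on generators A, E1, ..., E6. Write -b = m1^2 + ... + m5^2 with gcd(m1,...,m5) = 1. Then the map σ sending F1 ↦ ((a+2)/2)(A - E6) - E1 + E6 and F2 ↦ (m + m1)(A - E6) - (m1 E1 + ... + m5 E5) is a primitive embedding of lattices. -/
import Mathlib


/-- The bilinear form of the lattice `Σ₆ = ⟨2⟩ ⊕ ⟨-2⟩⁶` with basis `A, E1, ..., E6`. -/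
def formSigma6 (u v : Fin 7 → ℤ) : ℤ :=
  2 * u 0 * v 0 -
    2 * (u 1 * v 1 + u 2 * v 2 + u 3 * v 3 + u 4 * v 4 + u 5 * v 5 + u 6 * v 6)

/-- The bilinear form of the rank-2 lattice with Gram matrix `[[2a, 2m],[2m, 2b]]`. -/
def formLambda (a m b : ℤ) (x y : Fin 2 → ℤ) : ℤ :=
  2 * a * x 0 * y 0 + 2 * m * (x 0 * y 1 + x 1 * y 0) + 2 * b * x 1 * y 1

lemma gcd_dvd_aux (n x : ℤ) (p q : ℕ) (hp : n ∣ (p : ℤ) * x) (hq : n ∣ (q : ℤ) * x) :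
    n ∣ (Nat.gcd p q : ℤ) * x := by
  have h := Nat.gcd_eq_gcd_ab p q
  have he : (Nat.gcd p q : ℤ) * x =
      Nat.gcdA p q * ((p : ℤ) * x) + Nat.gcdB p q * ((q : ℤ) * x) := by
    rw [h]; ring
  rw [he]
  exact dvd_add (hp.mul_left _) (hq.mul_left _)

/-- Case `2 ∣ a`: the map `F1 ↦ ((a+2)/2)(A - E6) - E1 + E6`,
`F2 ↦ (m+m1)(A - E6) - (m1 E1 + ... + m5 E5)` is a primitive embedding of the
lattice `[[2a,2m],[2m,2b]]` into `Σ₆`. -/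
theorem stmt_6 (a m b : ℤ) (ha : 0 ≤ a) (hm : 0 ≤ m) (hb : b < 0)
    (hind : a * b < m ^ 2) (heven : 2 ∣ a)
    (m1 m2 m3 m4 m5 : ℕ)
    (hsum : -b = (m1 : ℤ) ^ 2 + (m2 : ℤ) ^ 2 + (m3 : ℤ) ^ 2 + (m4 : ℤ) ^ 2 + (m5 : ℤ) ^ 2)
    (hgcd : Nat.gcd m1 (Nat.gcd m2 (Nat.gcd m3 (Nat.gcd m4 m5))) = 1)
    (σ : (Fin 2 → ℤ) → (Fin 7 → ℤ))
    (hσ : ∀ x, σ x =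
      x 0 • ![(a + 2) / 2, -1, 0, 0, 0, 0, 1 - (a + 2) / 2] +
      x 1 • ![m + (m1 : ℤ), -(m1 : ℤ), -(m2 : ℤ), -(m3 : ℤ), -(m4 : ℤ), -(m5 : ℤ),
              -(m + (m1 : ℤ))]) :
    (∀ x y, formSigma6 (σ x) (σ y) = formLambda a m b x y) ∧
    Function.Injective σ ∧
    (∀ (y : Fin 7 → ℤ) (n : ℤ), n ≠ 0 → n • y ∈ Set.range σ → y ∈ Set.range σ) := by
  obtain ⟨k, hk⟩ := heven
  subst hk
  have hdiv : (2 * k + 2) / 2 = k + 1 := by omega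
  -- component formulas
  have comp : ∀ x : Fin 2 → ℤ,
      σ x 0 = x 0 * (k + 1) + x 1 * (m + m1) ∧
      σ x 1 = -(x 0) - x 1 * m1 ∧
      σ x 2 = -(x 1 * m2) ∧
      σ x 3 = -(x 1 * m3) ∧
      σ x 4 = -(x 1 * m4) ∧
      σ x 5 = -(x 1 * m5) ∧
      σ x 6 = x 0 * (1 - (k + 1)) - x 1 * (m + m1) := by
    intro x
    rw [hσ x]
    refine ⟨?_, ?_, ?_, ?_, ?_, ?_, ?_⟩
    · show x 0 * ((2 * k + 2) / 2) + x 1 * (m + (m1 : ℤ)) = _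
      rw [hdiv]
    · show x 0 * (-1) + x 1 * (-(m1 : ℤ)) = _
      ring
    · show x 0 * 0 + x 1 * (-(m2 : ℤ)) = _
      ring
    · show x 0 * 0 + x 1 * (-(m3 : ℤ)) = _
      ring
    · show x 0 * 0 + x 1 * (-(m4 : ℤ)) = _
      ring
    · show x 0 * 0 + x 1 * (-(m5 : ℤ)) = _
      ring
    · show x 0 * (1 - (2 * k + 2) / 2) + x 1 * (-(m + (m1 : ℤ))) = _
      rw [hdiv]; ring
  refine ⟨?_, ?_, ?_⟩
  · intro x y
    obtain ⟨hx0, hx1, hx2, hx3, hx4, hx5, hx6⟩ := comp x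
    obtain ⟨hy0, hy1, hy2, hy3, hy4, hy5, hy6⟩ := comp y
    rw [formSigma6, formLambda, hx0, hx1, hx2, hx3, hx4, hx5, hx6,
      hy0, hy1, hy2, hy3, hy4, hy5, hy6]
    linear_combination (2 * x 1 * y 1) * hsum
  · intro x y h
    obtain ⟨hx0, hx1, hx2, hx3, hx4, hx5, hx6⟩ := comp x
    obtain ⟨hy0, hy1, hy2, hy3, hy4, hy5, hy6⟩ := comp y
    have e0 : σ x 0 = σ y 0 := by rw [h]
    have e1 : σ x 1 = σ y 1 := by rw [h]
    have e2 : σ x 2 = σ y 2 := by rw [h]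
    have e3 : σ x 3 = σ y 3 := by rw [h]
    have e4 : σ x 4 = σ y 4 := by rw [h]
    have e5 : σ x 5 = σ y 5 := by rw [h]
    have e6 : σ x 6 = σ y 6 := by rw [h]
    rw [hx0, hy0] at e0
    rw [hx1, hy1] at e1
    rw [hx2, hy2] at e2
    rw [hx3, hy3] at e3
    rw [hx4, hy4] at e4
    rw [hx5, hy5] at e5
    rw [hx6, hy6] at e6
    have hx00 : x 0 = y 0 := by linarith [e0, e6]
    have h1 : (m1 : ℤ) * (x 1 - y 1) = 0 := by linear_combination -e1 - hx00
    have h2 : (m2 : ℤ) * (x 1 - y 1) = 0 := by linear_combination -e2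
    have h3 : (m3 : ℤ) * (x 1 - y 1) = 0 := by linear_combination -e3
    have h4 : (m4 : ℤ) * (x 1 - y 1) = 0 := by linear_combination -e4
    have h5 : (m5 : ℤ) * (x 1 - y 1) = 0 := by linear_combination -e5
    have hbx : (-b) * (x 1 - y 1) = 0 := by
      linear_combination (x 1 - y 1) * hsum + (m1 : ℤ) * h1 + (m2 : ℤ) * h2 +
        (m3 : ℤ) * h3 + (m4 : ℤ) * h4 + (m5 : ℤ) * h5
    have hx11 : x 1 = y 1 := by
      have hb' : (-b) ≠ 0 := by omega
      have := mul_eq_zero.mp hbx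
      rcases this with h | h
      · exact absurd h hb'
      · linarith
    funext i
    fin_cases i
    · exact hx00
    · exact hx11
  · rintro y n hn ⟨x, hx⟩
    obtain ⟨hx0, hx1, hx2, hx3, hx4, hx5, hx6⟩ := comp x
    have e0 : σ x 0 = n * y 0 := by rw [hx]; rfl
    have e1 : σ x 1 = n * y 1 := by rw [hx]; rfl
    have e2 : σ x 2 = n * y 2 := by rw [hx]; rfl
    have e3 : σ x 3 = n * y 3 := by rw [hx]; rfl
    have e4 : σ x 4 = n * y 4 := by rw [hx]; rfl
    have e5 : σ x 5 = n * y 5 := by rw [hx]; rfl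
    have e6 : σ x 6 = n * y 6 := by rw [hx]; rfl
    rw [hx0] at e0; rw [hx1] at e1; rw [hx2] at e2; rw [hx3] at e3
    rw [hx4] at e4; rw [hx5] at e5; rw [hx6] at e6
    have hd0 : n ∣ x 0 := ⟨y 0 + y 6, by linarith [e0, e6]⟩
    have hd1 : n ∣ (m1 : ℤ) * x 1 := by
      obtain ⟨p, hp⟩ := hd0
      exact ⟨-(y 1) - p, by linear_combination -e1 - hp⟩
    have hd2 : n ∣ (m2 : ℤ) * x 1 := ⟨-(y 2), by linear_combination -e2⟩
    have hd3 : n ∣ (m3 : ℤ) * x 1 := ⟨-(y 3), by linear_combination -e3⟩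
    have hd4 : n ∣ (m4 : ℤ) * x 1 := ⟨-(y 4), by linear_combination -e4⟩
    have hd5 : n ∣ (m5 : ℤ) * x 1 := ⟨-(y 5), by linear_combination -e5⟩
    have hdx1 : n ∣ x 1 := by
      have h45 := gcd_dvd_aux n (x 1) m4 m5 hd4 hd5
      have h345 := gcd_dvd_aux n (x 1) m3 _ hd3 h45
      have h2345 := gcd_dvd_aux n (x 1) m2 _ hd2 h345
      have hall := gcd_dvd_aux n (x 1) m1 _ hd1 h2345
      rwa [hgcd, Nat.cast_one, one_mul] at hall
    obtain ⟨p, hp⟩ := hd0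
    obtain ⟨q, hq⟩ := hdx1
    refine ⟨![p, q], ?_⟩
    obtain ⟨hz0, hz1, hz2, hz3, hz4, hz5, hz6⟩ := comp ![p, q]
    have hp0 : (![p, q] : Fin 2 → ℤ) 0 = p := rfl
    have hp1 : (![p, q] : Fin 2 → ℤ) 1 = q := rfl
    simp only [hp0, hp1] at hz0 hz1 hz2 hz3 hz4 hz5 hz6
    funext i
    fin_cases i
    · refine mul_left_cancel₀ hn ?_
      show n * σ ![p, q] 0 = n * y 0
      rw [hz0]; linear_combination e0 - (k + 1) * hp - (m + (m1 : ℤ)) * hq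
    · refine mul_left_cancel₀ hn ?_
      show n * σ ![p, q] 1 = n * y 1
      rw [hz1]; linear_combination e1 + hp + (m1 : ℤ) * hq
    · refine mul_left_cancel₀ hn ?_
      show n * σ ![p, q] 2 = n * y 2
      rw [hz2]; linear_combination e2 + (m2 : ℤ) * hq
    · refine mul_left_cancel₀ hn ?_
      show n * σ ![p, q] 3 = n * y 3
      rw [hz3]; linear_combination e3 + (m3 : ℤ) * hq
    · refine mul_left_cancel₀ hn ?_
      show n * σ ![p, q] 4 = n * y 4
      rw [hz4]; linear_combination e4 + (m4 : ℤ) * hq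
    · refine mul_left_cancel₀ hn ?_
      show n * σ ![p, q] 5 = n * y 5
      rw [hz5]; linear_combination e5 + (m5 : ℤ) * hq
    · refine mul_left_cancel₀ hn ?_
      show n * σ ![p, q] 6 = n * y 6
      rw [hz6]; linear_combination e6 - (1 - (k + 1)) * hp + (m + (m1 : ℤ)) * hq
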